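/- Let d ≥ 1, k ≥ 1, and let x, y ∈ (ℝ^d)^k. Then the infimum over all isometries g of ℝ^d of ‖x − g·y‖ (with g acting diagonally on the k components and ‖·‖ the Euclidean norm on (ℝ^d)^k) is attained: there exists an isometry g₀ of ℝ^d such that ‖x − g₀·y‖ = inf over isometries g of ‖x − g·y‖. -/

import Mathlib

open MeasureTheory Matrix

noncomputable section

/-- `ℝ^d` with the Euclidean norm. -/
abbrev Pt (d : ℕ) := EuclideanSpace ℝ (Fin d)

/-- `(ℝ^d)^k` with the Euclidean norm. -/
abbrev Cfg (d k : ℕ) := PiLp 2 fun _ : Fin k => Pt d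

instance (d k : ℕ) : MeasurableSpace (Cfg d k) :=
  MeasurableSpace.comap WithLp.ofLp (inferInstance : MeasurableSpace (∀ _ : Fin k, Pt d))

/-- The diagonal action of an isometry `g` of `ℝ^d` on `(ℝ^d)^k`:
`g·(x₁,…,x_k) = (g x₁, …, g x_k)`. -/
def diagAct {d k : ℕ} (g : Pt d ≃ᵢ Pt d) (x : Cfg d k) : Cfg d k := WithLp.toLp 2 fun i => g (x i)

/-- `d(x,y) :=` the infimum over all isometries `g` of `ℝ^d` of `‖x − g·y‖`. -/
def confDist {d k : ℕ} (x y : Cfg d k) : ℝ :=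
  ⨅ g : Pt d ≃ᵢ Pt d, ‖x - diagAct g y‖

/-- The action of `ρ ∈ O(d)` on a vector of `ℝ^d`. -/
def rotAct {d : ℕ} (ρ : orthogonalGroup (Fin d) ℝ) (v : Pt d) : Pt d :=
  Matrix.toEuclideanCLM (𝕜 := ℝ) (ρ : Matrix (Fin d) (Fin d) ℝ) v

/-- The distance on `O(d)` induced by the operator norm on `d × d` matrices. -/
def opDist {d : ℕ} (ρ σ : orthogonalGroup (Fin d) ℝ) : ℝ :=
  ‖Matrix.toEuclideanCLM (𝕜 := ℝ) (ρ : Matrix (Fin d) (Fin d) ℝ)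
    - Matrix.toEuclideanCLM (𝕜 := ℝ) (σ : Matrix (Fin d) (Fin d) ℝ)‖

instance (d : ℕ) : MeasurableSpace (orthogonalGroup (Fin d) ℝ) := borel _
instance (d : ℕ) : BorelSpace (orthogonalGroup (Fin d) ℝ) := ⟨rfl⟩

instance (d : ℕ) : IsTopologicalGroup (orthogonalGroup (Fin d) ℝ) where
  continuous_inv := continuous_induced_rng.mpr <|
    (continuous_star.comp continuous_subtype_val : _)

theorem isCompact_orthogonalGroup (d : ℕ) :
    IsCompact (orthogonalGroup (Fin d) ℝ : Set (Matrix (Fin d) (Fin d) ℝ)) := by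
  have hsub : (orthogonalGroup (Fin d) ℝ : Set (Matrix (Fin d) (Fin d) ℝ)) ⊆
      Set.pi Set.univ fun _ : Fin d => Set.pi Set.univ fun _ : Fin d => Set.Icc (-1 : ℝ) 1 := by
    intro U hU i _ j _
    have := entry_norm_bound_of_unitary hU i j
    rw [Real.norm_eq_abs] at this
    constructor <;> linarith [abs_le.mp this]
  have hclosed : IsClosed (orthogonalGroup (Fin d) ℝ : Set (Matrix (Fin d) (Fin d) ℝ)) := by
    have heq : (orthogonalGroup (Fin d) ℝ : Set (Matrix (Fin d) (Fin d) ℝ)) =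
        {U | star U * U = 1} ∩ {U | U * star U = 1} := by
      ext U
      exact Unitary.mem_iff
    rw [heq]
    exact (isClosed_eq ((continuous_star.comp continuous_id).matrix_mul continuous_id)
        continuous_const).inter
      (isClosed_eq (continuous_id.matrix_mul (continuous_star.comp continuous_id))
        continuous_const)
  have hcpt : IsCompact (Set.pi Set.univ fun _ : Fin d => Set.pi Set.univ
      fun _ : Fin d => Set.Icc (-1 : ℝ) 1) :=
    isCompact_univ_pi fun _ => isCompact_univ_pi fun _ => isCompact_Icc
  exact hcpt.of_isClosed_subset hclosed hsub

instance (d : ℕ) : CompactSpace (orthogonalGroup (Fin d) ℝ) :=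
  isCompact_iff_compactSpace.mp (isCompact_orthogonalGroup d)

set_option synthInstance.maxHeartbeats 1000000 in
instance (d : ℕ) : LocallyCompactSpace (orthogonalGroup (Fin d) ℝ) := inferInstance

/-- The Haar measure on `O(d)`. -/
def haarOd (d : ℕ) : Measure (orthogonalGroup (Fin d) ℝ) := Measure.haar

open Metric

/-! Every isometry of a finite-dimensional real normed space `E` is `v ↦ L v + c` with `L` a linear
isometry (Mazur–Ulam), so `‖x - g·y‖` is a continuous function of `(L, c)`. The linear isometries
form a compact set of operators, and since `‖c‖ ≤ ‖xᵢ‖ + ‖yᵢ‖ + ‖x - g·y‖` for any index `i`, only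
translations in a bounded ball can compete for the infimum; a minimum over this compact set is
therefore a global minimum. -/

section

variable {E F : Type*} [NormedAddCommGroup E] [NormedSpace ℝ E] [NormedAddCommGroup F]
  [NormedSpace ℝ F]

lemma isCompact_setOf_norm_map_eq [FiniteDimensional ℝ E] :
    IsCompact {L : E →L[ℝ] E | ∀ v, ‖L v‖ = ‖v‖} := by
  refine isCompact_of_isClosed_isBounded ?_ ?_
  · simp only [Set.ofPred_forall]
    exact isClosed_iInter fun v =>
      isClosed_eq (ContinuousLinearMap.apply ℝ E v).continuous.norm continuous_const
  · refine (isBounded_closedBall (x := 0) (r := 1)).subset fun L hL => ?_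
    rw [mem_closedBall_zero_iff]
    exact L.opNorm_le_bound zero_le_one fun v => by rw [hL v, one_mul]

lemma IsometryEquiv.exists_eq_clm_add (g : E ≃ᵢ F) :
    ∃ L : E →L[ℝ] F, (∀ v, ‖L v‖ = ‖v‖) ∧ ∃ c, ∀ v, g v = L v + c :=
  ⟨g.toRealLinearIsometryEquiv, g.toRealLinearIsometryEquiv.norm_map, g 0, fun v => by
    simp [g.toRealLinearIsometryEquiv_apply]⟩

def isometryEquivOfNormMapEq [FiniteDimensional ℝ E] (L : E →L[ℝ] E) (hL : ∀ v, ‖L v‖ = ‖v‖)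
    (c : E) : E ≃ᵢ E :=
  ((LinearIsometry.mk L.toLinearMap hL).toLinearIsometryEquiv rfl).toIsometryEquiv.trans
    (IsometryEquiv.addRight c)

@[simp]
lemma isometryEquivOfNormMapEq_apply [FiniteDimensional ℝ E] (L : E →L[ℝ] E)
    (hL : ∀ v, ‖L v‖ = ‖v‖) (c v : E) : isometryEquivOfNormMapEq L hL c v = L v + c :=
  rfl

variable {ι : Type*} [Fintype ι] {p : ENNReal} [Fact (1 ≤ p)]

def alignmentError (x y : PiLp p fun _ : ι => E) (q : (E →L[ℝ] E) × E) : ℝ :=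
  ‖x - WithLp.toLp p fun i => q.1 (y i) + q.2‖

lemma continuous_alignmentError (x y : PiLp p fun _ : ι => E) :
    Continuous (alignmentError x y) :=
  (continuous_const.sub <| (PiLp.continuous_toLp p _).comp <| continuous_pi fun _ =>
    (continuous_fst.clm_apply continuous_const).add continuous_snd).norm

lemma norm_le_alignmentError (x y : PiLp p fun _ : ι => E) (i : ι) {L : E →L[ℝ] E}
    (hL : ∀ v, ‖L v‖ = ‖v‖) (c : E) : ‖c‖ ≤ ‖x i‖ + ‖y i‖ + alignmentError x y (L, c) := by
  have hi : ‖x i - (L (y i) + c)‖ ≤ alignmentError x y (L, c) :=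
    PiLp.norm_apply_le (x - WithLp.toLp p fun i => L (y i) + c) i
  calc ‖c‖ = ‖x i - (x i - (L (y i) + c)) - L (y i)‖ := by abel_nf
    _ ≤ ‖x i‖ + ‖x i - (L (y i) + c)‖ + ‖L (y i)‖ :=
      (norm_sub_le _ _).trans (add_le_add_left (norm_sub_le _ _) _)
    _ ≤ ‖x i‖ + ‖y i‖ + alignmentError x y (L, c) := by rw [hL]; linarith

lemma exists_forall_alignmentError_le [FiniteDimensional ℝ E] [Nonempty ι]
    (x y : PiLp p fun _ : ι => E) :
    ∃ q₀ : (E →L[ℝ] E) × E, (∀ v, ‖q₀.1 v‖ = ‖v‖) ∧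
      ∀ L : E →L[ℝ] E, (∀ v, ‖L v‖ = ‖v‖) → ∀ c,
        alignmentError x y q₀ ≤ alignmentError x y (L, c) := by
  let i := Classical.arbitrary ι
  set R := ‖x i‖ + ‖y i‖ + alignmentError x y (1, 0)
  have hR : (1, 0) ∈ {L : E →L[ℝ] E | ∀ v, ‖L v‖ = ‖v‖} ×ˢ closedBall (0 : E) R :=
    ⟨fun _ => rfl, mem_closedBall_zero_iff.mpr
      (norm_le_alignmentError x y i (L := 1) (fun _ => rfl) 0)⟩
  obtain ⟨q₀, ⟨hq₀, -⟩, hmin⟩ := (isCompact_setOf_norm_map_eq.prod (isCompact_closedBall 0 R))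
    |>.exists_isMinOn ⟨_, hR⟩ (continuous_alignmentError x y).continuousOn
  refine ⟨q₀, hq₀, fun L hL c => ?_⟩
  by_cases hc : ‖c‖ ≤ R
  · exact hmin ⟨hL, mem_closedBall_zero_iff.mpr hc⟩
  · have hq₀_le : alignmentError x y q₀ ≤ alignmentError x y (1, 0) := hmin hR
    linarith [norm_le_alignmentError x y i hL c]

theorem exists_isometryEquiv_forall_norm_sub_le [FiniteDimensional ℝ E] [Nonempty ι]
    (x y : PiLp p fun _ : ι => E) :
    ∃ g₀ : E ≃ᵢ E, ∀ g : E ≃ᵢ E,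
      ‖x - WithLp.toLp p fun i => g₀ (y i)‖ ≤ ‖x - WithLp.toLp p fun i => g (y i)‖ := by
  obtain ⟨⟨L₀, c₀⟩, hL₀, hmin⟩ := exists_forall_alignmentError_le x y
  refine ⟨isometryEquivOfNormMapEq L₀ hL₀ c₀, fun g => ?_⟩
  obtain ⟨L, hL, c, hg⟩ := g.exists_eq_clm_add
  simp only [hg, isometryEquivOfNormMapEq_apply]
  exact hmin L hL c

end

theorem stmt4_general (d k : ℕ) (hk : 1 ≤ k) (x y : Cfg d k) :
    ∃ g₀ : Pt d ≃ᵢ Pt d, ‖x - diagAct g₀ y‖ = confDist x y := by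
  have : Nonempty (Fin k) := Fin.pos_iff_nonempty.mp hk
  obtain ⟨g₀, hg₀⟩ := exists_isometryEquiv_forall_norm_sub_le x y
  refine ⟨g₀, le_antisymm (le_ciInf hg₀) (ciInf_le ⟨0, ?_⟩ g₀)⟩
  rintro _ ⟨g, rfl⟩
  exact norm_nonneg _

/-- The infimum over isometries `g` of `ℝ^d` of `‖x − g·y‖` is attained. -/
theorem stmt4 (d k : ℕ) (hd : 1 ≤ d) (hk : 1 ≤ k) (x y : Cfg d k) :
    ∃ g₀ : Pt d ≃ᵢ Pt d, ‖x - diagAct g₀ y‖ = confDist x y :=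
  stmt4_general d k hk x y
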